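/- arXiv:1108.3587 — 5 statements merged into one kernel-verified Lean document; each statement's English description precedes it below -/
import Mathlib

section
/- Let A and B be n×n matrices over a field, with A invertible, and set C = B·A⁻¹. Then the sum over all pairs 1 ≤ r < s ≤ n of the determinant of the matrix obtained from A by replacing its r-th column by B_r and its s-th column by B_s equals (det A)·Σ_{r<s} (C_{rr}·C_{ss} − C_{rs}·C_{sr}). -/
open Matrix

/-!
Replacing the columns in `S` of `A` by those of `B = A * (A⁻¹ * B)` gives `A` times the
identity with its columns in `S` replaced by those of `A⁻¹ * B`, whose determinant is the
principal `S`-minor of `A⁻¹ * B`. The sum of the `k × k` principal minors of `M` is the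
coefficient of `X ^ k` in `det (1 + X • M)`, and the Weinstein–Aronszajn identity makes this
the same for `A⁻¹ * B` and `B * A⁻¹`.
-/

theorem Finset.sum_powersetCard_two {α β : Type*} [Fintype α] [LinearOrder α] [AddCommMonoid β]
    (f : Finset α → β) :
    ∑ S ∈ Finset.univ.powersetCard 2, f S
      = ∑ r : α, ∑ s ∈ Finset.univ.filter (fun s => r < s), f {r, s} := by
  rw [Finset.sum_sigma']
  symm
  refine Finset.sum_bij (fun p _ => {p.1, p.2}) ?_ ?_ ?_ ?_
  · rintro ⟨r, s⟩ h
    simp only [Finset.mem_sigma, Finset.mem_filter] at h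
    simp [Finset.mem_powersetCard, Finset.card_pair h.2.2.ne]
  · rintro ⟨r, s⟩ h ⟨r', s'⟩ h' he
    simp only [Finset.mem_sigma, Finset.mem_filter] at h h'
    have hr : r ∈ ({r', s'} : Finset α) := he ▸ by simp
    have hs : s ∈ ({r', s'} : Finset α) := he ▸ by simp
    have hr' : r' ∈ ({r, s} : Finset α) := he ▸ by simp
    simp only [Finset.mem_insert, Finset.mem_singleton] at hr hs hr'
    grind
  · intro S hS
    obtain ⟨x, y, hxy, rfl⟩ := Finset.card_eq_two.mp (Finset.mem_powersetCard.mp hS).2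
    rcases hxy.lt_or_gt with h | h
    · exact ⟨⟨x, y⟩, by simp [h], rfl⟩
    · exact ⟨⟨y, x⟩, by simp [h], Finset.pair_comm _ _⟩
  · intros; rfl

namespace Matrix

section ReplaceCols

variable {m n α : Type*} [DecidableEq n]

def replaceCols (A B : Matrix m n α) (S : Finset n) : Matrix m n α :=
  of fun i => S.piecewise (B i) (A i)

theorem updateCol_updateCol_eq_replaceCols (A B : Matrix m n α) (r s : n) :
    (A.updateCol r (fun i => B i r)).updateCol s (fun i => B i s) = replaceCols A B {r, s} := by
  ext i j
  by_cases hjs : j = s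
  · subst hjs
    simp [replaceCols]
  · by_cases hjr : j = r
    · subst hjr
      simp [replaceCols, hjs]
    · simp [replaceCols, hjs, hjr]

end ReplaceCols

variable {n R : Type*} [Fintype n] [DecidableEq n] [CommRing R]

theorem sum_principal_minors_mul_comm (M N : Matrix n n R) (k : ℕ) :
    ∑ S ∈ Finset.univ.powersetCard k,
        ((M * N).submatrix (Subtype.val : S → n) Subtype.val).det =
      ∑ S ∈ Finset.univ.powersetCard k,
        ((N * M).submatrix (Subtype.val : S → n) Subtype.val).det := by
  rw [← coeff_det_one_add_X_smul_eq_sum_minors, ← coeff_det_one_add_X_smul_eq_sum_minors,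
    Matrix.map_mul, Matrix.map_mul, ← smul_mul_assoc, det_one_add_mul_comm, mul_smul_comm]

theorem replaceCols_self_mul {m : Type*} (A : Matrix m n R) (D : Matrix n n R) (S : Finset n) :
    replaceCols A (A * D) S = A * replaceCols 1 D S := by
  ext i j
  by_cases hj : j ∈ S <;> simp [replaceCols, hj, mul_apply, Finset.piecewise, one_apply]

theorem det_replaceCols_one (D : Matrix n n R) (S : Finset n) :
    (replaceCols 1 D S).det = (D.submatrix (Subtype.val : S → n) Subtype.val).det := by
  rw [← det_transpose, ← det_transpose (D.submatrix _ _), transpose_submatrix,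
    ← det_piecewise_one_eq_submatrix_det]
  congr 1
  ext i j
  by_cases hi : i ∈ S <;> simp [replaceCols, hi, Finset.piecewise, one_apply, eq_comm]

theorem det_replaceCols (A B : Matrix n n R) (hA : IsUnit A.det) (S : Finset n) :
    (replaceCols A B S).det =
      A.det * ((A⁻¹ * B).submatrix (Subtype.val : S → n) Subtype.val).det := by
  rw [← det_replaceCols_one, ← det_mul, ← replaceCols_self_mul,
    mul_nonsing_inv_cancel_left _ _ hA]

theorem sum_det_replaceCols_powersetCard (A B : Matrix n n R) (hA : IsUnit A.det) (k : ℕ) :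
    ∑ S ∈ Finset.univ.powersetCard k, (replaceCols A B S).det
      = A.det * ∑ S ∈ Finset.univ.powersetCard k,
          ((B * A⁻¹).submatrix (Subtype.val : S → n) Subtype.val).det := by
  simp_rw [det_replaceCols A B hA, ← Finset.mul_sum, sum_principal_minors_mul_comm]

theorem det_submatrix_pair {α : Type*} [LinearOrder α] (M : Matrix α α R) {r s : α}
    (hrs : r < s) :
    (M.submatrix (Subtype.val : ({r, s} : Finset α) → α) Subtype.val).det =
      M r r * M s s - M r s * M s r := by
  have hcard : ({r, s} : Finset α).card = 2 := Finset.card_pair hrs.ne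
  set e := Finset.orderIsoOfFin _ hcard
  have h0 : (e 0 : α) = r := by
    have := Finset.orderEmbOfFin_zero hcard two_pos
    simp_all [e, Finset.coe_orderIsoOfFin_apply, hrs.le]
  have h1 : (e 1 : α) = s := by
    have := Finset.orderEmbOfFin_last hcard two_pos
    simp_all [e, Finset.coe_orderIsoOfFin_apply, hrs.le]
  rw [← det_submatrix_equiv_self e.toEquiv, det_fin_two]
  simp [h0, h1]

end Matrix

/-- Haine–Semengue lemma (ii): the sum over pairs `r < s` of determinants of `A`
with columns `r` and `s` replaced by the corresponding columns of `B` equals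
`det A · Σ_{r<s} (C_{rr} C_{ss} − C_{rs} C_{sr})` where `C = B A⁻¹`. -/
theorem sum_det_two_column_replacement {K : Type*} [Field K] {n : ℕ}
    (A B : Matrix (Fin n) (Fin n) K) (hA : IsUnit A.det) :
    ∑ r : Fin n, ∑ s ∈ Finset.univ.filter (fun s : Fin n => r < s),
        ((A.updateCol r (fun i => B i r)).updateCol s (fun i => B i s)).det
      = A.det * ∑ r : Fin n, ∑ s ∈ Finset.univ.filter (fun s : Fin n => r < s),
          ((B * A⁻¹) r r * (B * A⁻¹) s s - (B * A⁻¹) r s * (B * A⁻¹) s r) := by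
  calc _ = ∑ r : Fin n, ∑ s ∈ Finset.univ.filter (fun s : Fin n => r < s),
          (replaceCols A B {r, s}).det := by
        simp_rw [updateCol_updateCol_eq_replaceCols]
    _ = ∑ S ∈ Finset.univ.powersetCard 2, (replaceCols A B S).det :=
        (Finset.sum_powersetCard_two fun S => (replaceCols A B S).det).symm
    _ = A.det * ∑ S ∈ Finset.univ.powersetCard 2,
          ((B * A⁻¹).submatrix (Subtype.val : S → Fin n) Subtype.val).det :=
        sum_det_replaceCols_powersetCard A B hA 2
    _ = _ := by
        rw [Finset.sum_powersetCard_two]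
        congr 1
        exact Finset.sum_congr rfl fun r _ => Finset.sum_congr rfl fun s hs =>
          det_submatrix_pair _ (Finset.mem_filter.mp hs).2
end

section
/- Let (μ_j)_{j∈ℤ} be a family of elements of a commutative ring, let m ∈ ℤ, and fix integer tuples i_0,…,i_{n−1} and j_0,…,j_{n−1}. Define p(i;j) = det(μ_{i_k − j_l})_{0≤k,l<n}. Then Σ_{l=0}^{n−1} p(i_0,…,i_{n−1}; j_0,…,j_l − m,…,j_{n−1}) = Σ_{l=0}^{n−1} p(i_0,…,i_l + m,…,i_{n−1}; j_0,…,j_{n−1}). -/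
open Matrix

/-- For Plücker coordinates `p(i;j) = det(μ_{i_k − j_l})`, shifting one `j`-index
down by `m` and summing equals shifting one `i`-index up by `m` and summing. -/
theorem plucker_shift_sum {R : Type*} [CommRing R] {n : ℕ}
    (μ : ℤ → R) (m : ℤ) (i j : Fin n → ℤ) :
    ∑ l : Fin n, (Matrix.of fun k l' : Fin n => μ (i k - Function.update j l (j l - m) l')).det
      = ∑ l : Fin n, (Matrix.of fun k l' : Fin n => μ (Function.update i l (i l + m) k - j l')).det := by
  simp only [Matrix.det_apply', Matrix.of_apply]
  rw [Finset.sum_comm]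
  conv_rhs => rw [Finset.sum_comm]
  refine Finset.sum_congr rfl fun σ _ => ?_
  rw [← Finset.mul_sum, ← Finset.mul_sum]
  congr 1
  rw [← Equiv.sum_comp σ (fun l => ∏ l', μ (Function.update i l (i l + m) (σ l') - j l'))]
  refine Finset.sum_congr rfl fun l _ => Finset.prod_congr rfl fun l' _ => ?_
  simp only [Function.update_apply, σ.injective.eq_iff]
  split_ifs with h
  · subst h; ring_nf
  · rfl
end

section
/- With p(i;j) = det(μ_{i_k − j_l})_{0≤k,l<n} as before and m ∈ ℤ, Σ_{0≤r<s≤n−1} p(i; j with j_r and j_s both decreased by m) = Σ_{0≤r<s≤n−1} p(i with i_r and i_s both increased by m; j). -/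
open Matrix

private lemma triple_swap {α β : Type*} [Fintype α] [Fintype β] {M : Type*} [AddCommMonoid M]
    (t : α → Finset α) (f : α → α → β → M) :
    ∑ r : α, ∑ s ∈ t r, ∑ σ : β, f r s σ = ∑ σ : β, ∑ r : α, ∑ s ∈ t r, f r s σ :=
  calc ∑ r : α, ∑ s ∈ t r, ∑ σ : β, f r s σ
      = ∑ r : α, ∑ σ : β, ∑ s ∈ t r, f r s σ :=
        Finset.sum_congr rfl fun r _ => Finset.sum_comm
    _ = ∑ σ : β, ∑ r : α, ∑ s ∈ t r, f r s σ := Finset.sum_comm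

private lemma pair_sum_sym2 {R : Type*} [AddCommMonoid R] {n : ℕ}
    (F : Fin n → Fin n → R) (hF : ∀ a b, F a b = F b a) :
    ∑ r : Fin n, ∑ s ∈ Finset.univ.filter (fun s : Fin n => r < s), F r s
      = ∑ z ∈ Finset.univ.sym2 with ¬ z.IsDiag, Sym2.lift ⟨F, hF⟩ z := by
  have hoff : (∑ r : Fin n, ∑ s ∈ Finset.univ.filter (fun s : Fin n => r < s), F r s)
      = ∑ p ∈ Finset.univ.offDiag with p.1 < p.2, Sym2.lift ⟨F, hF⟩ s(p.1, p.2) := by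
    have h1 : Finset.univ.offDiag.filter (fun p : Fin n × Fin n => p.1 < p.2)
        = (Finset.univ ×ˢ Finset.univ).filter (fun p : Fin n × Fin n => p.1 < p.2) := by
      ext ⟨a, b⟩
      simp only [Finset.mem_filter, Finset.mem_offDiag, Finset.mem_product, Finset.mem_univ,
        true_and]
      exact ⟨fun h => h.2, fun h => ⟨ne_of_lt h, h⟩⟩
    rw [h1, Finset.sum_filter, Finset.sum_product]
    simp only [Sym2.lift_mk, ← Finset.sum_filter]
  rw [hoff]
  convert (Finset.sum_sym2_filter_not_isDiag (Finset.univ : Finset (Fin n))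
    (Sym2.lift ⟨F, hF⟩)).symm using 2 <;>
  · ext x
    simp [Finset.mem_filter]

private lemma pair_sum_perm {R : Type*} [AddCommMonoid R] {n : ℕ}
    (F : Fin n → Fin n → R) (hF : ∀ a b, F a b = F b a) (σ : Equiv.Perm (Fin n)) :
    ∑ r : Fin n, ∑ s ∈ Finset.univ.filter (fun s : Fin n => r < s), F (σ r) (σ s)
      = ∑ r : Fin n, ∑ s ∈ Finset.univ.filter (fun s : Fin n => r < s), F r s := by
  have hF' : ∀ a b, F (σ a) (σ b) = F (σ b) (σ a) := fun a b => hF _ _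
  rw [pair_sum_sym2 _ hF', pair_sum_sym2 _ hF]
  refine Finset.sum_nbij' (fun z => Sym2.map σ z) (fun z => Sym2.map σ.symm z)
    ?_ ?_ ?_ ?_ ?_
  · intro z hz
    simp only [Finset.mem_filter, Finset.mem_sym2_iff, Finset.mem_univ, implies_true,
      true_and] at hz ⊢
    exact fun h => hz ((Sym2.isDiag_map σ.injective).mp h)
  · intro z hz
    simp only [Finset.mem_filter, Finset.mem_sym2_iff, Finset.mem_univ, implies_true,
      true_and] at hz ⊢
    exact fun h => hz ((Sym2.isDiag_map σ.symm.injective).mp h)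
  · intro z _
    induction z using Sym2.ind with
    | _ a b => simp [Sym2.map_pair_eq]
  · intro z _
    induction z using Sym2.ind with
    | _ a b => simp [Sym2.map_pair_eq]
  · intro z _
    induction z using Sym2.ind with
    | _ a b => simp [Sym2.map_pair_eq]

/-- For Plücker coordinates `p(i;j) = det(μ_{i_k − j_l})`, decreasing two `j`-indices
by `m` and summing over pairs equals increasing two `i`-indices by `m` and summing. -/
theorem plucker_double_shift_sum {R : Type*} [CommRing R] {n : ℕ}
    (μ : ℤ → R) (m : ℤ) (i j : Fin n → ℤ) :
    ∑ r : Fin n, ∑ s ∈ Finset.univ.filter (fun s : Fin n => r < s),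
        (Matrix.of fun k l' : Fin n =>
          μ (i k - Function.update (Function.update j r (j r - m)) s (j s - m) l')).det
      = ∑ r : Fin n, ∑ s ∈ Finset.univ.filter (fun s : Fin n => r < s),
        (Matrix.of fun k l' : Fin n =>
          μ (Function.update (Function.update i r (i r + m)) s (i s + m) k - j l')).det := by
  simp only [Matrix.det_apply, Matrix.of_apply]
  -- swap sums so that the permutation sum is outermost
  rw [triple_swap, triple_swap]
  refine Finset.sum_congr rfl fun σ _ => ?_
  simp only [← Finset.smul_sum]
  congr 1
  have key : ∀ (r s : Fin n), r ≠ s → ∀ k : Fin n,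
      Function.update (Function.update j r (j r - m)) s (j s - m) k
        = j k - (if k = r ∨ k = s then m else 0) := by
    intro r s hrs k
    rcases eq_or_ne k s with rfl | hks
    · simp [Function.update]
    · rcases eq_or_ne k r with rfl | hkr
      · simp [Function.update, hrs, hks]
      · simp [Function.update, hks, hkr]
  have key' : ∀ (r s : Fin n), r ≠ s → ∀ k : Fin n,
      Function.update (Function.update i r (i r + m)) s (i s + m) k
        = i k + (if k = r ∨ k = s then m else 0) := by
    intro r s hrs k
    rcases eq_or_ne k s with rfl | hks
    · simp [Function.update]
    · rcases eq_or_ne k r with rfl | hkr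
      · simp [Function.update, hrs, hks]
      · simp [Function.update, hks, hkr]
  set F : Fin n → Fin n → R := fun a b =>
    ∏ k : Fin n, μ (i (σ k) - j k + (if k = a ∨ k = b then m else 0)) with hFdef
  have hF : ∀ a b, F a b = F b a := by
    intro a b
    simp only [hFdef]
    refine Finset.prod_congr rfl fun k _ => ?_
    by_cases h : k = a <;> by_cases h' : k = b <;> simp [h, h']
  calc ∑ r : Fin n, ∑ s ∈ Finset.univ.filter (fun s : Fin n => r < s),
        ∏ k : Fin n,
          μ (i (σ k) - Function.update (Function.update j r (j r - m)) s (j s - m) k)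
      = ∑ r : Fin n, ∑ s ∈ Finset.univ.filter (fun s : Fin n => r < s), F r s := by
        refine Finset.sum_congr rfl fun r _ => Finset.sum_congr rfl fun s hs => ?_
        have hrs : r ≠ s := ne_of_lt (Finset.mem_filter.mp hs).2
        refine Finset.prod_congr rfl fun k _ => ?_
        rw [key r s hrs k]
        ring_nf
    _ = ∑ r : Fin n, ∑ s ∈ Finset.univ.filter (fun s : Fin n => r < s),
          F (σ.symm r) (σ.symm s) := by
        rw [← pair_sum_perm F hF σ.symm]
    _ = ∑ r : Fin n, ∑ s ∈ Finset.univ.filter (fun s : Fin n => r < s),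
        ∏ k : Fin n,
          μ (Function.update (Function.update i r (i r + m)) s (i s + m) (σ k) - j k) := by
        refine Finset.sum_congr rfl fun r _ => Finset.sum_congr rfl fun s hs => ?_
        have hrs : r ≠ s := ne_of_lt (Finset.mem_filter.mp hs).2
        refine Finset.prod_congr rfl fun k _ => ?_
        rw [key' r s hrs (σ k)]
        have hc : (σ k = r ∨ σ k = s) ↔ (k = σ.symm r ∨ k = σ.symm s) := by
          constructor
          · rintro (h | h)
            · exact Or.inl (by simp [← h])
            · exact Or.inr (by simp [← h])
          · rintro (h | h)
            · exact Or.inl (by simp [h])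
            · exact Or.inr (by simp [h])
        simp only [hFdef, hc]
        ring_nf
end

section
/- Fix integers i_0 < i_1 < ⋯ < i_{n−1} and define the n×n Schur determinant S_{i_{n−1}−(n−1),…,i_0}(t) = det(S_{i_{n−k}−(n−k)+l−k}(t))_{1≤k,l≤n}. Then Σ_{l=1}^{n} S_{i_{n−1}−(n−1),…,i_{n−l}−(n−l)−1,…,i_0}(t) equals the determinant of the n×n matrix whose (k,l) entry is S_{i_{n−k}−n+l−k+1}(t) for l ≥ 2 and S_{i_{n−k}−n−k+1}(t) for l = 1 — i.e., the determinant obtained from the original matrix by shifting only the first column index down by 1. In other words, the sum of the n determinants in which one row's index is decreased by 1 collapses to a single determinant. -/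
open MvPolynomial Finset

/-! Write `M` for the Schur matrix and `N` for the matrix with every index lowered by one.
Lowering the index of one row replaces that row of `M` by the row of `N`, and the sum over
rows of these determinants is `trace (adjugate M * N)`, which is also the sum over columns of
the determinants in which one column of `M` is replaced by that of `N`. An entry depends on
its column `s` only through `a_r + s`, so column `s` of `N` is column `s - 1` of `M`, and every
term of the column sum except the first vanishes. -/

/-- The elementary Schur polynomial `S_n(t₁, t₂, …)`, defined as the coefficient of
`z^n` in `exp (Σ_{k≥1} t_k z^k)`; the variable `X k` of `MvPolynomial ℕ ℂ`
represents `t_{k+1}`.  (For `n ≥ 0` only powers `m ≤ n` of the exponent series and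
only the variables `t_1, …, t_n` contribute to the coefficient of `z^n`, so the
truncated finite expression below computes exactly this coefficient;
`S_n = 0` for `n < 0`.) -/
noncomputable def elemSchur (n : ℤ) : MvPolynomial ℕ ℂ :=
  if 0 ≤ n then
    ∑ m ∈ Finset.range (n.toNat + 1), (m.factorial : ℂ)⁻¹ •
      (PowerSeries.coeff (R := MvPolynomial ℕ ℂ) n.toNat
        ((∑ k ∈ Finset.range (n.toNat + 1),
            PowerSeries.C (R := MvPolynomial ℕ ℂ) (X k) * PowerSeries.X ^ (k + 1)) ^ m))
  else 0

namespace Matrix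

variable {ι R : Type*} [Fintype ι] [DecidableEq ι] [CommRing R]

theorem det_updateCol_eq_sum_adjugate_mul (M : Matrix ι ι R) (c : ι) (v : ι → R) :
    (M.updateCol c v).det = ∑ k, M.adjugate c k * v k := by
  rw [← cramer_apply, cramer_eq_adjugate_mulVec, mulVec, dotProduct]

theorem det_updateRow_eq_sum_mul_adjugate (M : Matrix ι ι R) (r : ι) (v : ι → R) :
    (M.updateRow r v).det = ∑ k, v k * M.adjugate k r := by
  rw [← det_transpose, ← updateCol_transpose, det_updateCol_eq_sum_adjugate_mul,
    ← adjugate_transpose]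
  exact Finset.sum_congr rfl fun k _ => mul_comm _ _

theorem sum_det_updateRow_eq_trace_mul_adjugate (M N : Matrix ι ι R) :
    ∑ r, (M.updateRow r (N r)).det = (N * M.adjugate).trace := by
  simp only [det_updateRow_eq_sum_mul_adjugate, trace, diag, mul_apply]

theorem sum_det_updateCol_eq_trace_adjugate_mul (M N : Matrix ι ι R) :
    ∑ c, (M.updateCol c (fun k => N k c)).det = (M.adjugate * N).trace := by
  simp only [det_updateCol_eq_sum_adjugate_mul, trace, diag, mul_apply]

theorem sum_det_updateRow_eq_sum_det_updateCol (M N : Matrix ι ι R) :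
    ∑ r, (M.updateRow r (N r)).det = ∑ c, (M.updateCol c (fun k => N k c)).det := by
  rw [sum_det_updateRow_eq_trace_mul_adjugate, sum_det_updateCol_eq_trace_adjugate_mul,
    trace_mul_comm]

end Matrix

section ColumnShift

open Matrix

variable {R : Type*} [CommRing R] {n : ℕ}

theorem det_updateCol_shift_eq_zero (f : Fin n → ℤ → R) {c : Fin n} (hc : (c : ℕ) ≠ 0) :
    ((of fun k l : Fin n => f k l).updateCol c (fun k => f k ((c : ℤ) - 1))).det = 0 := by
  set c' : Fin n := ⟨c - 1, by omega⟩
  have hc' : ((c' : ℕ) : ℤ) = (c : ℤ) - 1 := by simp only [c']; omega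
  refine det_zero_of_column_eq (i := c') (j := c) (fun h => hc ?_) fun k => ?_
  · have := congrArg Fin.val h
    simp only [c'] at this
    omega
  · rw [updateCol_ne (fun h => by simp [c', Fin.ext_iff] at h; omega), updateCol_self, of_apply,
      hc']

theorem sum_det_updateRow_shift [NeZero n] (f : Fin n → ℤ → R) :
    ∑ r, ((of fun k l : Fin n => f k l).updateRow r (fun l => f r (l - 1))).det
      = (of fun k l : Fin n => f k (l - if (l : ℕ) = 0 then 1 else 0)).det := by
  refine (sum_det_updateRow_eq_sum_det_updateCol _ (of fun k l : Fin n => f k (l - 1))).trans ?_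
  simp only [of_apply]
  rw [Fintype.sum_eq_single 0 fun c hc => det_updateCol_shift_eq_zero f (by simpa using hc)]
  congr 1
  ext k l
  by_cases hl : l = 0
  · subst hl
    simp
  · simp [Fin.val_eq_zero_iff, hl]

end ColumnShift

open Matrix in
theorem sum_schur_det_row_shift_general {n : ℕ} (hn : 1 ≤ n) (i : Fin n → ℤ) :
    ∑ m : Fin n,
        (Matrix.of fun k l : Fin n =>
          elemSchur (Function.update i m (i m - 1) k.rev - (k.rev : ℤ) + l - k)).det
      = (Matrix.of fun k l : Fin n =>
          elemSchur (i k.rev - (k.rev : ℤ) + l - k - if (l : ℕ) = 0 then 1 else 0)).det := by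
  have : NeZero n := ⟨by omega⟩
  set f : Fin n → ℤ → MvPolynomial ℕ ℂ := fun k j => elemSchur (i k.rev - (k.rev : ℤ) + j - k)
  have hrow (m : Fin n) : (of fun k l : Fin n =>
      elemSchur (Function.update i m (i m - 1) k.rev - (k.rev : ℤ) + l - k))
        = (of fun k l : Fin n => f k l).updateRow m.rev (fun l => f m.rev (l - 1)) := by
    ext k l
    by_cases hk : k = m.rev
    · subst hk
      simp only [of_apply, updateRow_self, Fin.rev_rev, Function.update_self, f]
      ring_nf
    · rw [updateRow_ne hk, of_apply, of_apply,
        Function.update_of_ne (fun h => hk (by rw [← h, Fin.rev_rev]))]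
  calc _ = ∑ r, ((of fun k l : Fin n => f k l).updateRow r (fun l => f r (l - 1))).det :=
        Fintype.sum_equiv Fin.revPerm _ _ fun m => by rw [hrow, Fin.revPerm_apply]
    _ = (of fun k l : Fin n => f k (l - if (l : ℕ) = 0 then 1 else 0)).det :=
        sum_det_updateRow_shift f
    _ = _ := by
        congr 1
        ext k l
        simp only [of_apply, f]
        ring_nf

open Matrix in
/-- Lemma on Schur determinants: for `i_0 < ⋯ < i_{n−1}`, the sum over `l` of the
Schur determinants `det (S_{a_r + s − r})` in which the single index `a_l` is
decreased by `1` collapses to the single determinant obtained from the original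
matrix by decreasing only the first column's index by `1`.  Here (0-based)
`a_r = i_{n−1−r} − (n−1−r)` and the `(r,s)` entry of the Schur matrix is
`S(a_r + s − r)`. -/
theorem sum_schur_det_row_shift {n : ℕ} (hn : 1 ≤ n) (i : Fin n → ℤ)
    (hi : StrictMono i) :
    ∑ m : Fin n,
        (Matrix.of fun k l : Fin n =>
          elemSchur (Function.update i m (i m - 1) k.rev - (k.rev : ℤ) + l - k)).det
      = (Matrix.of fun k l : Fin n =>
          elemSchur (i k.rev - (k.rev : ℤ) + l - k - if (l : ℕ) = 0 then 1 else 0)).det :=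
  sum_schur_det_row_shift_general hn i
end

section
/- Let L be a quasi-definite Toeplitz bilinear form on C[z,z⁻¹], and let {f_n, g_n} be monic right bi-orthogonal L-polynomials with five-term recurrence coefficients z f_n = Σ_{i=n−2}^{n+2} α_{n,i} f_i. Then α_{2n−1, 2n−3} = 0 and α_{2n, 2n+2} = 0 for all n ≥ 1: i.e., the CMV matrix A₁, although pentadiagonal, has zero entries in positions (2n−1, 2n−3) and (2n, 2n+2). -/
open LaurentPolynomial

/-- `𝕃⁺_n`: for `n = 2m` the span of `z^{−m},…,z^m`; for `n = 2m+1` the span of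
`z^{−m},…,z^{m+1}`. -/
noncomputable def Lplus (n : ℕ) : Submodule ℂ (LaurentPolynomial ℂ) :=
  Submodule.span ℂ {p | ∃ m : ℤ, -((n : ℤ) / 2) ≤ m ∧ m ≤ ((n : ℤ) + 1) / 2 ∧ p = T m}

/-- `𝕃⁻_n`: for `n = 2m` the span of `z^{−m},…,z^m`; for `n = 2m+1` the span of
`z^{−m−1},…,z^m`. -/
noncomputable def Lminus (n : ℕ) : Submodule ℂ (LaurentPolynomial ℂ) :=
  Submodule.span ℂ {p | ∃ m : ℤ, -(((n : ℤ) + 1) / 2) ≤ m ∧ m ≤ (n : ℤ) / 2 ∧ p = T m}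

/-- `𝕃⁺_{n−1}`, with the convention `𝕃⁺_{−1} = {0}`. -/
noncomputable def LplusPred : ℕ → Submodule ℂ (LaurentPolynomial ℂ)
  | 0 => ⊥
  | n + 1 => Lplus n

/-- `𝕃⁻_{n−1}`, with the convention `𝕃⁻_{−1} = {0}`. -/
noncomputable def LminusPred : ℕ → Submodule ℂ (LaurentPolynomial ℂ)
  | 0 => ⊥
  | n + 1 => Lminus n

/-- `{f_n, g_n}` is a sequence of right bi-orthogonal Laurent polynomials for `L`. -/
def IsRightBiOrtho (L : LaurentPolynomial ℂ →ₗ[ℂ] LaurentPolynomial ℂ →ₗ[ℂ] ℂ)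
    (f g : ℕ → LaurentPolynomial ℂ) : Prop :=
  (∀ n, f n ∈ Lplus n ∧ f n ∉ LplusPred n ∧ g n ∈ Lplus n ∧ g n ∉ LplusPred n) ∧
  ∃ h : ℕ → ℂ, (∀ n, h n ≠ 0) ∧ ∀ m n, L (f m) (g n) = if m = n then h n else 0


/-- The pair `{f_n, g_n}` is monic: the coefficient of `z^{−n}` in `f_{2n}, g_{2n}`
and of `z^{n+1}` in `f_{2n+1}, g_{2n+1}` equals `1`. -/
def IsMonicPair (f g : ℕ → LaurentPolynomial ℂ) : Prop :=
  ∀ n : ℕ, if Even n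
    then (f n).coeff (-((n : ℤ) / 2)) = 1 ∧ (g n).coeff (-((n : ℤ) / 2)) = 1
    else (f n).coeff (((n : ℤ) + 1) / 2) = 1 ∧ (g n).coeff (((n : ℤ) + 1) / 2) = 1

/-
Pairing the recurrence with `g_j` gives `α_{N,j} h_j = L[z f_N, g_j]`. Biorthogonality makes
`f_0, …, f_m` (and likewise `g_0, …, g_m`) linearly independent, so by a dimension count they
span `𝕃⁺_m`; hence `L[·, g_j]` and `L[f_j, ·]` vanish on `𝕃⁺_m` for `m < j`. Multiplication by
`z` maps `𝕃⁺_{2n}` into `𝕃⁺_{2n+1}`, which kills `α_{2n,2n+2}`. Multiplication by `z⁻¹` maps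
`𝕃⁺_{2n−3}` into `𝕃⁺_{2n−2}`, and the Toeplitz property moves `z` across `L`, so
`α_{2n−1,2n−3} h_{2n−3} = L[f_{2n−1}, z⁻¹ g_{2n−3}] = 0`.
-/

lemma linearIndependent_of_biorthogonal {ι R M N : Type*} [CommRing R] [NoZeroDivisors R]
    [AddCommGroup M] [Module R M] [AddCommGroup N] [Module R N] (B : M →ₗ[R] N →ₗ[R] R)
    {v : ι → M} {w : ι → N} (hoff : ∀ i j, i ≠ j → B (v i) (w j) = 0)
    (hdiag : ∀ i, B (v i) (w i) ≠ 0) : LinearIndependent R v := by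
  refine linearIndependent_iff'.2 fun s c hsum i hi => ?_
  rw [← mul_eq_zero_iff_right (hdiag i)]
  have hpair := congrArg (B · (w i)) hsum
  simp only [map_sum, map_smul, LinearMap.sum_apply, LinearMap.smul_apply, smul_eq_mul,
    map_zero, LinearMap.zero_apply] at hpair
  rwa [Finset.sum_eq_single_of_mem i hi fun j _ hji => by rw [hoff j i hji, mul_zero]] at hpair

lemma apply_T_mul_T_mul {L : LaurentPolynomial ℂ →ₗ[ℂ] LaurentPolynomial ℂ →ₗ[ℂ] ℂ}
    (hT : ∀ m n : ℤ, L (T m) (T n) = L (T (m - n)) 1) (k : ℤ) (p q : LaurentPolynomial ℂ) :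
    L (T k * p) (T k * q) = L p q := by
  have : L.compl₁₂ (LinearMap.mulLeft ℂ (T k)) (LinearMap.mulLeft ℂ (T k)) = L := by
    ext a b
    change L (T k * T a) (T k * T b) = L (T a) (T b)
    rw [← T_add, ← T_add, hT, hT a b, add_sub_add_left_eq_sub]
  exact LinearMap.congr_fun₂ this p q

lemma Lplus_eq_span_finset (n : ℕ) :
    Lplus n = Submodule.span ℂ ((Finset.Icc (-((n : ℤ) / 2)) (((n : ℤ) + 1) / 2)).image
      (fun m => (T m : LaurentPolynomial ℂ)) : Set (LaurentPolynomial ℂ)) := by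
  rw [Lplus]
  congr 1
  ext p
  simp [eq_comm, and_assoc]

instance (n : ℕ) : FiniteDimensional ℂ (Lplus n) := by
  rw [Lplus_eq_span_finset]
  exact FiniteDimensional.span_finset ℂ _

lemma finrank_Lplus_le (n : ℕ) : Module.finrank ℂ (Lplus n) ≤ n + 1 := by
  rw [Lplus_eq_span_finset]
  refine (finrank_span_finset_le_card _).trans (Finset.card_image_le.trans ?_)
  rw [Int.card_Icc]
  omega

lemma Lplus_mono : Monotone Lplus := by
  intro i m him
  refine Submodule.span_mono ?_
  rintro _ ⟨k, hk₁, hk₂, rfl⟩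
  exact ⟨k, by omega, by omega, rfl⟩

lemma T_mul_mem_Lplus {n n' : ℕ} {a : ℤ}
    (hshift : ∀ k : ℤ, -((n : ℤ) / 2) ≤ k → k ≤ ((n : ℤ) + 1) / 2 →
      -((n' : ℤ) / 2) ≤ a + k ∧ a + k ≤ ((n' : ℤ) + 1) / 2)
    {p : LaurentPolynomial ℂ} (hp : p ∈ Lplus n) : T a * p ∈ Lplus n' := by
  have : Lplus n ≤ (Lplus n').comap (LinearMap.mulLeft ℂ (T a)) := by
    refine Submodule.span_le.2 ?_
    rintro _ ⟨k, hk₁, hk₂, rfl⟩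
    simp only [SetLike.mem_coe, Submodule.mem_comap, LinearMap.mulLeft_apply, ← T_add]
    exact Submodule.subset_span ⟨a + k, (hshift k hk₁ hk₂).1, (hshift k hk₁ hk₂).2, rfl⟩
  exact this hp

lemma T_one_mul_mem_Lplus_even {k : ℕ} {p : LaurentPolynomial ℂ} (hp : p ∈ Lplus (2 * k)) :
    T 1 * p ∈ Lplus (2 * k + 1) :=
  T_mul_mem_Lplus (fun j _ _ => by push_cast; omega) hp

lemma T_neg_one_mul_mem_Lplus_odd {k : ℕ} {p : LaurentPolynomial ℂ}
    (hp : p ∈ Lplus (2 * k + 1)) : T (-1) * p ∈ Lplus (2 * k + 2) :=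
  T_mul_mem_Lplus (fun j _ _ => by push_cast; omega) hp

lemma span_range_eq_Lplus {F : ℕ → LaurentPolynomial ℂ} (hF : ∀ n, F n ∈ Lplus n)
    (hli : LinearIndependent ℂ F) (m : ℕ) :
    Submodule.span ℂ (Set.range fun i : Fin (m + 1) => F i) = Lplus m := by
  refine Submodule.eq_of_le_of_finrank_le ?_ ?_
  · rw [Submodule.span_le]
    rintro _ ⟨i, rfl⟩
    exact Lplus_mono (Nat.lt_succ_iff.1 i.isLt) (hF i)
  · rw [finrank_span_eq_card (b := fun i : Fin (m + 1) => F i) (hli.comp _ Fin.val_injective),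
      Fintype.card_fin]
    exact finrank_Lplus_le m

section Biorthogonal

variable {L : LaurentPolynomial ℂ →ₗ[ℂ] LaurentPolynomial ℂ →ₗ[ℂ] ℂ}
  {f g : ℕ → LaurentPolynomial ℂ}

lemma apply_sum_smul_of_mem {h : ℕ → ℂ}
    (horth : ∀ m n, L (f m) (g n) = if m = n then h n else 0)
    {s : Finset ℕ} (c : ℕ → ℂ) {j : ℕ} (hj : j ∈ s) :
    L (∑ i ∈ s, c i • f i) (g j) = c j * h j := by
  simp only [map_sum, map_smul, LinearMap.sum_apply, LinearMap.smul_apply, horth, smul_eq_mul,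
    mul_ite, mul_zero, Finset.sum_ite_eq', if_pos hj]

lemma apply_eq_zero_of_mem_Lplus_left (hoff : ∀ i j, i ≠ j → L (f i) (g j) = 0)
    (hdiag : ∀ i, L (f i) (g i) ≠ 0) (hf : ∀ n, f n ∈ Lplus n) {m j : ℕ} (hmj : m < j)
    {p : LaurentPolynomial ℂ} (hp : p ∈ Lplus m) : L p (g j) = 0 := by
  rw [← span_range_eq_Lplus hf (linearIndependent_of_biorthogonal L hoff hdiag) m] at hp
  have hker : Submodule.span ℂ (Set.range fun i : Fin (m + 1) => f i) ≤
      LinearMap.ker (L.flip (g j)) := by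
    rw [Submodule.span_le]
    rintro _ ⟨i, rfl⟩
    exact hoff i j (by omega)
  exact hker hp

lemma apply_eq_zero_of_mem_Lplus_right (hoff : ∀ i j, i ≠ j → L (f i) (g j) = 0)
    (hdiag : ∀ i, L (f i) (g i) ≠ 0) (hg : ∀ n, g n ∈ Lplus n) {m j : ℕ} (hmj : m < j)
    {q : LaurentPolynomial ℂ} (hq : q ∈ Lplus m) : L (f j) q = 0 :=
  apply_eq_zero_of_mem_Lplus_left (L := L.flip) (fun i j hij => hoff j i hij.symm) hdiag hg
    hmj hq

end Biorthogonal

theorem CMV_pentadiagonal_zero_entries_general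
    (L : LaurentPolynomial ℂ →ₗ[ℂ] LaurentPolynomial ℂ →ₗ[ℂ] ℂ)
    (hT : ∀ m n : ℤ, L (T m) (T n) = L (T (m - n)) 1)
    (f g : ℕ → LaurentPolynomial ℂ)
    (hmem : ∀ n, f n ∈ Lplus n ∧ f n ∉ LplusPred n ∧ g n ∈ Lplus n ∧ g n ∉ LplusPred n)
    (h : ℕ → ℂ) (hh : ∀ n, h n ≠ 0)
    (horth : ∀ m n, L (f m) (g n) = if m = n then h n else 0)
    (α : ℕ → ℕ → ℂ)
    (hα : ∀ n, T 1 * f n = ∑ i ∈ Finset.range (n + 3), α n i • f i) :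
    ∀ n : ℕ, 1 ≤ n →
      (∀ i : ℕ, (i : ℤ) = 2 * (n : ℤ) - 3 → α (2 * n - 1) i = 0) ∧
      α (2 * n) (2 * n + 2) = 0 := by
  have hf n := (hmem n).1
  have hg n := (hmem n).2.2.1
  have hoff i j (hij : i ≠ j) : L (f i) (g j) = 0 := by rw [horth, if_neg hij]
  have hdiag i : L (f i) (g i) ≠ 0 := by rw [horth, if_pos rfl]; exact hh i
  have hcoeff N j (hj : j < N + 3) : α N j * h j = L (T 1 * f N) (g j) := by
    rw [hα, apply_sum_smul_of_mem horth _ (Finset.mem_range.2 hj)]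
  intro n hn
  refine ⟨fun i hi => ?_, ?_⟩
  · obtain ⟨k, rfl, rfl⟩ : ∃ k, n = k + 2 ∧ i = 2 * k + 1 := ⟨n - 2, by omega, by omega⟩
    rw [show 2 * (k + 2) - 1 = 2 * k + 3 by omega, ← mul_eq_zero_iff_right (hh _)]
    calc α (2 * k + 3) (2 * k + 1) * h (2 * k + 1)
        = L (T 1 * f (2 * k + 3)) (T 1 * (T (-1) * g (2 * k + 1))) := by
          rw [hcoeff _ _ (by omega), ← mul_assoc, ← T_add, add_neg_cancel, T_zero, one_mul]
      _ = L (f (2 * k + 3)) (T (-1) * g (2 * k + 1)) := apply_T_mul_T_mul hT 1 _ _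
      _ = 0 := apply_eq_zero_of_mem_Lplus_right hoff hdiag hg (Nat.lt_succ_self _)
          (T_neg_one_mul_mem_Lplus_odd (hg _))
  · rw [← mul_eq_zero_iff_right (hh _), hcoeff _ _ (by omega)]
    exact apply_eq_zero_of_mem_Lplus_left hoff hdiag hf (Nat.lt_succ_self _)
      (T_one_mul_mem_Lplus_even (hf _))

/-- For a quasi-definite Toeplitz bilinear form `L` with monic right bi-orthogonal
Laurent polynomials `{f_n, g_n}` and five-term recurrence
`z f_n = Σ_{i≤n+2} α_{n,i} f_i`, the coefficients `α_{2n−1,2n−3}` and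
`α_{2n,2n+2}` vanish for all `n ≥ 1` (the first one being a coefficient only when
`2n − 3 ≥ 0`, i.e. the index `2n − 3` is interpreted in `ℤ`). -/
theorem CMV_pentadiagonal_zero_entries
    (L : LaurentPolynomial ℂ →ₗ[ℂ] LaurentPolynomial ℂ →ₗ[ℂ] ℂ)
    (hT : ∀ m n : ℤ, L (T m) (T n) = L (T (m - n)) 1)
    (hQD : ∀ n : ℕ, (Matrix.of fun k l : Fin (n + 1) =>
      L (T (k : ℤ)) (T (l : ℤ))).det ≠ 0)
    (f g : ℕ → LaurentPolynomial ℂ)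
    (hmem : ∀ n, f n ∈ Lplus n ∧ f n ∉ LplusPred n ∧ g n ∈ Lplus n ∧ g n ∉ LplusPred n)
    (h : ℕ → ℂ) (hh : ∀ n, h n ≠ 0)
    (horth : ∀ m n, L (f m) (g n) = if m = n then h n else 0)
    (hmonic : IsMonicPair f g)
    (α : ℕ → ℕ → ℂ)
    (hα : ∀ n, T 1 * f n = ∑ i ∈ Finset.range (n + 3), α n i • f i) :
    ∀ n : ℕ, 1 ≤ n →
      (∀ i : ℕ, (i : ℤ) = 2 * (n : ℤ) - 3 → α (2 * n - 1) i = 0) ∧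
      α (2 * n) (2 * n + 2) = 0 :=
  CMV_pentadiagonal_zero_entries_general L hT f g hmem h hh horth α hα
end
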